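/- The number of connected components of the meander whose upper arch configuration is {(1,2n)} ∪ {(2,3),(4,5),…,(2n−2,2n−1)} and whose lower arch configuration is the rainbow matching {(1,2n),(2,2n−1),…,(n,n+1)} equals 1 + ⌊n/2⌋, for n ≥ 2. -/

import Mathlib

/-- A Dyck path of size `n`: a list of booleans (`true` = north step, `false` = east step)
from `(0,0)` to `(n,n)` staying weakly above the diagonal `y = x`. -/
def IsDyckPath (n : ℕ) (w : List Bool) : Prop :=
  w.length = 2 * n ∧ w.count true = n ∧
    ∀ k, (w.take k).count false ≤ (w.take k).count true

/-- The `y`-coordinate of the lattice point reached after `k` steps. -/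
def ycoord (w : List Bool) (k : ℕ) : ℕ := (w.take k).count true

/-- The `x`-coordinate of the lattice point reached after `k` steps. -/
def xcoord (w : List Bool) (k : ℕ) : ℕ := (w.take k).count false

/-- A peak: a north step at position `i` followed by an east step. -/
def IsPeak (w : List Bool) (i : ℕ) : Prop := w[i]? = some true ∧ w[i+1]? = some false

/-- A valley: an east step at position `i` followed by a north step. -/
def IsValley (w : List Bool) (i : ℕ) : Prop := w[i]? = some false ∧ w[i+1]? = some true

/-- Height above the diagonal after `k` steps. -/
def pdepth (w : List Bool) (k : ℕ) : ℤ := (ycoord w k : ℤ) - (xcoord w k : ℤ)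

/-- Step `i` (a north step) of `w` is matched with step `j` (an east step):
the facing east step at the same height (balanced-parentheses matching). -/
def Matches (w : List Bool) (i j : ℕ) : Prop :=
  i < j ∧ w[i]? = some true ∧ w[j]? = some false ∧
    pdepth w (j + 1) = pdepth w i ∧ ∀ k, i < k → k ≤ j → pdepth w i < pdepth w k

/-- The graph on `m` points whose edges are the upper arches and the lower arches;
its connected components are the components of the corresponding meander. -/
def meanderGraph (m : ℕ) (upper lower : ℕ → ℕ → Prop) : SimpleGraph (Fin m) where
  Adj i j := i ≠ j ∧ (upper i.1 j.1 ∨ upper j.1 i.1 ∨ lower i.1 j.1 ∨ lower j.1 i.1)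
  symm := by
    constructor
    intro i j h
    exact ⟨h.1.symm, by tauto⟩
  loopless := by
    constructor
    intro i h
    exact h.1 rfl

/-- The number of components of the meander with the matching of `P` above and the
matching of `Q` below. -/
noncomputable def trajPQ (n : ℕ) (P Q : List Bool) : ℕ :=
  Nat.card (meanderGraph (2 * n) (Matches P) (Matches Q)).ConnectedComponent

/-- The number of components of the meander with the matching of `P` above and the
rainbow matching `i ↦ 2n - 1 - i` below. -/
noncomputable def traj (n : ℕ) (P : List Bool) : ℕ :=
  Nat.card (meanderGraph (2 * n) (Matches P)
    (fun i j => i + j + 1 = 2 * n)).ConnectedComponent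

/-- No peak with even `y`-coordinate and no valley with odd `x`-coordinate. -/
def NoBadCorner (w : List Bool) : Prop :=
  (∀ i, IsPeak w i → Odd (ycoord w (i + 1))) ∧
  (∀ i, IsValley w i → Even (xcoord w (i + 1)))

/-- A bad corner: a peak with even `y`-coordinate or a valley with odd `x`-coordinate. -/
def IsBadCorner (w : List Bool) (i : ℕ) : Prop :=
  (IsPeak w i ∧ Even (ycoord w (i + 1))) ∨ (IsValley w i ∧ Odd (xcoord w (i + 1)))

/-- Interchange the two steps of the corner at positions `i`, `i+1`. -/
def swapCorner (w : List Bool) (i : ℕ) : List Bool :=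
  (w.set i (w.getD (i + 1) true)).set (i + 1) (w.getD i true)

open Classical in
/-- The involution `φ`: swap the two steps of the first bad corner, if any. -/
noncomputable def phiMap (w : List Bool) : List Bool :=
  if h : ∃ i, IsBadCorner w i then swapCorner w (Nat.find h) else w

/-- The number of unit squares between a Dyck path and the diagonal `y = x`. -/
def area (w : List Bool) : ℕ :=
  ((List.range w.length).map fun i =>
    if w.getD i true then 0 else ycoord w i - xcoord w i - 1).sum

/-- The zigzag Dyck path `(NE)^m`. -/
def zigzag (m : ℕ) : List Bool := (List.replicate m [true, false]).flatten

/-- `N^{2a_1} E^{2b_1} ⋯ N^{2a_t} E^{2b_t}` for `ab = [(a_1,b_1),…,(a_t,b_t)]`. -/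
def doubledWord (ab : List (ℕ × ℕ)) : List Bool :=
  (ab.map fun p => List.replicate (2 * p.1) true ++ List.replicate (2 * p.2) false).flatten

/-- `N^{a_1} E^{b_1} ⋯ N^{a_t} E^{b_t}` for `ab = [(a_1,b_1),…,(a_t,b_t)]`. -/
def halfWord (ab : List (ℕ × ℕ)) : List Bool :=
  (ab.map fun p => List.replicate p.1 true ++ List.replicate p.2 false).flatten

/-- All peaks at odd height (`height` = `y - x` at the peak's lattice point). -/
def AllPeaksOdd (w : List Bool) : Prop :=
  ∀ i, IsPeak w i → Odd (ycoord w (i + 1) - xcoord w (i + 1))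

/-- All peaks at even height. -/
def AllPeaksEven (w : List Bool) : Prop :=
  ∀ i, IsPeak w i → Even (ycoord w (i + 1) - xcoord w (i + 1))

/-- Steps of a Motzkin path: up, horizontal, down. -/
inductive MStep | U | H | D
deriving DecidableEq

/-- The total height change along a list of Motzkin steps. -/
def msum (l : List MStep) : ℤ :=
  (l.map fun s => match s with | MStep.U => 1 | MStep.H => 0 | MStep.D => -1).sum

/-- A Motzkin path of length `n`. -/
def IsMotzkin (n : ℕ) (l : List MStep) : Prop :=
  l.length = n ∧ msum l = 0 ∧ ∀ k, 0 ≤ msum (l.take k)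

/-- A Riordan path of length `n`: a Motzkin path with no horizontal step on the `x`-axis. -/
def IsRiordan (n : ℕ) (l : List MStep) : Prop :=
  IsMotzkin n l ∧ ∀ i, l[i]? = some MStep.H → msum (l.take i) ≠ 0

/-- The map `φ_A` from Dyck paths of size `n+1` (all peaks at odd height)
to Motzkin paths of length `n`: `v_j` is read off from steps `p_{2j} p_{2j+1}`. -/
def phiA (n : ℕ) (P : List Bool) : List MStep :=
  (List.range n).map fun j =>
    match P.getD (2 * j + 1) true, P.getD (2 * j + 2) true with
    | true, true => MStep.U
    | false, true => MStep.H
    | _, _ => MStep.D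

/-- The map `φ_B` from Dyck paths of size `n` (all peaks at even height)
to Riordan paths of length `n`: `u_j` is read off from steps `p_{2j-1} p_{2j}`. -/
def phiB (n : ℕ) (P : List Bool) : List MStep :=
  (List.range n).map fun j =>
    match P.getD (2 * j) true, P.getD (2 * j + 1) true with
    | true, true => MStep.U
    | false, true => MStep.H
    | _, _ => MStep.D

/-!
Points are `0`-indexed: the paper's point `k` is the vertex `k - 1`. Folding the strip along the
rainbow joins every point `v` to `min v (2n-1-v)`, its distance to the nearer end, which lies in
`[0, n)`. On these folded positions the upper arches join `0` to itself and `2k-1` to `2k`, so the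
components are the classes `{0}, {1,2}, {3,4}, …` below `n`, i.e. the fibres of
`v ↦ (min v (2n-1-v) + 1) / 2`, which takes the `n/2 + 1` values `0, …, n/2`.
-/

namespace SimpleGraph

variable {V W : Type*} {G : SimpleGraph V} {f : V → W}

theorem Reachable.apply_eq_of_adj (hadj : ∀ u v, G.Adj u v → f u = f v) {u v : V}
    (h : G.Reachable u v) : f u = f v := by
  rw [reachable_iff_reflTransGen] at h
  induction h with
  | refl => rfl
  | tail _ huv ih => exact ih.trans (hadj _ _ huv)

theorem card_connectedComponent_eq_of_fibers (hf : Function.Surjective f)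
    (hadj : ∀ u v, G.Adj u v → f u = f v) (hfib : ∀ u v, f u = f v → G.Reachable u v) :
    Nat.card G.ConnectedComponent = Nat.card W :=
  Nat.card_congr <|
    (Quot.congrRight fun u v => ⟨fun h => h.apply_eq_of_adj hadj, hfib u v⟩).trans
      (Setoid.quotientKerEquivOfSurjective f hf)

end SimpleGraph

namespace ShiftedZigzag

open SimpleGraph

def upperArches (n : ℕ) (i j : ℕ) : Prop :=
  (i = 0 ∧ j = 2 * n - 1) ∨ (Odd i ∧ j = i + 1 ∧ j + 1 < 2 * n)

def rainbow (n : ℕ) (i j : ℕ) : Prop := i + j + 1 = 2 * n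

abbrev meander (n : ℕ) : SimpleGraph (Fin (2 * n)) :=
  meanderGraph (2 * n) (upperArches n) (rainbow n)

variable {n : ℕ}

def fold (v : Fin (2 * n)) : Fin (2 * n) := ⟨min v.1 (2 * n - 1 - v.1), by omega⟩

theorem fold_val (v : Fin (2 * n)) : (fold v).1 = min v.1 (2 * n - 1 - v.1) := rfl

def level (v : Fin (2 * n)) : Fin (n / 2 + 1) := ⟨((fold v).1 + 1) / 2, by rw [fold_val]; omega⟩

theorem level_val (v : Fin (2 * n)) : (level v).1 = ((fold v).1 + 1) / 2 := rfl

theorem level_eq_of_adj {u v : Fin (2 * n)} (h : (meander n).Adj u v) : level u = level v := by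
  obtain ⟨-, harc⟩ := h
  simp only [upperArches, rainbow, Nat.odd_iff] at harc
  ext
  rw [level_val, level_val, fold_val, fold_val]
  omega

theorem fold_lt (v : Fin (2 * n)) : (fold v).1 < n := by
  rw [fold_val]; omega

theorem reachable_fold (v : Fin (2 * n)) : (meander n).Reachable v (fold v) := by
  by_cases hv : v.1 < n
  · rw [show fold v = v from Fin.ext (by rw [fold_val]; omega)]
  · refine Adj.reachable ⟨fun h => ?_, Or.inr (Or.inr (Or.inl ?_))⟩
    · have := congrArg Fin.val h; rw [fold_val] at this; omega
    · rw [rainbow, fold_val]; omega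

theorem reachable_of_lt_of_half_eq {a b : Fin (2 * n)} (ha : a.1 < n) (hb : b.1 < n)
    (hab : (a.1 + 1) / 2 = (b.1 + 1) / 2) : (meander n).Reachable a b := by
  wlog hle : a ≤ b generalizing a b
  · exact (this hb ha hab.symm (le_of_not_ge hle)).symm
  obtain rfl | hlt := hle.eq_or_lt
  · rfl
  · refine Adj.reachable ⟨hlt.ne, Or.inl (Or.inr ⟨Nat.odd_iff.2 ?_, ?_, ?_⟩)⟩ <;>
      (have := Fin.lt_def.1 hlt; omega)

theorem reachable_of_level_eq {u v : Fin (2 * n)} (h : level u = level v) :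
    (meander n).Reachable u v :=
  (reachable_fold u).trans <|
    (reachable_of_lt_of_half_eq (fold_lt u) (fold_lt v) (Fin.val_eq_of_eq h)).trans
      (reachable_fold v).symm

theorem level_surjective (hn : 0 < n) : Function.Surjective (level (n := n)) := fun k =>
  ⟨⟨2 * k.1 - 1, by omega⟩, Fin.ext (by simp only [level_val, fold_val]; omega)⟩

end ShiftedZigzag

/-- The meander whose upper arches are `{(1,2n)} ∪ {(2,3),(4,5),…,(2n-2,2n-1)}` and whose
lower arches form the rainbow matching has exactly `1 + ⌊n/2⌋` components, for `n ≥ 2`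
(points `0`-indexed here). -/
theorem shifted_zigzag_meander_components (n : ℕ) (hn : 2 ≤ n) :
    Nat.card (meanderGraph (2 * n)
      (fun i j => (i = 0 ∧ j = 2 * n - 1) ∨ (Odd i ∧ j = i + 1 ∧ j + 1 < 2 * n))
      (fun i j => i + j + 1 = 2 * n)).ConnectedComponent = 1 + n / 2 := by
  calc _ = Nat.card (Fin (n / 2 + 1)) :=
        SimpleGraph.card_connectedComponent_eq_of_fibers
          (ShiftedZigzag.level_surjective (by omega))
          (fun _ _ => ShiftedZigzag.level_eq_of_adj)
          (fun _ _ => ShiftedZigzag.reachable_of_level_eq)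
    _ = 1 + n / 2 := by rw [Nat.card_fin, add_comm]
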